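/- There is a one-to-one correspondence between eigenpairs of the modified Maxwell's Stekloff eigenvalue problem and those of the Neumann-to-Dirichlet operator T: if (λ,u) satisfies a(u,v) = −λ⟨S u_T, v_T⟩ for all v ∈ H(curl;Ω) with u nontrivial, then (−1/λ, S u_T) is an eigenpair of T; conversely if (μ,g) is an eigenpair of T with μ ≠ 0 and w solves the source problem with data g, then (−1/μ, w) is an eigenpair of the Stekloff problem. Consequently, since T is compact and self-adjoint, the Stekloff eigenvalues form a discrete set. -/

import Mathlib

/-!
Abstract setting: `V ≃ H(curl;Ω)`, `L ≃ L²(Ω)³`, `Bt ≃ L²_t(Γ)` with `D = H(div⁰_Γ;Γ)`,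
`traceT u = u_T`, and `⟨f, v_T⟩ = ⟪v_T, f⟫_{L²(Γ)}`, so that inner products are linear in the
second argument.

A Stekloff eigenpair `(λ, u)` says exactly that `u` solves the source problem with data
`-λ S u_T`, hence `T (S u_T) = -λ⁻¹ S u_T`; conversely, if `T g = μ g` and `w` solves the source
problem with data `g`, then `S w_T = T g = μ g`, which is the Stekloff equation for `λ = -1/μ`.
Both `λ` and `S u_T` are nonzero because `a(u, ·) = 0` forces `u = 0`.

For discreteness, unit eigenvectors of the compact self-adjoint `T` for distinct eigenvalues
are orthogonal, so their images under `T` are `ε`-separated when the eigenvalues have modulus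
at least `ε`; they lie in the relatively compact image of the unit ball, so there are only
finitely many such eigenvalues. Hence every disc `|λ| ≤ r` contains only finitely many
Stekloff eigenvalues.
-/

noncomputable section

/-- `a(u,v) = (curl u, curl v) − κ²(ε_r u, v)`. -/
def aForm {V L : Type}
    [NormedAddCommGroup V] [InnerProductSpace ℂ V]
    [NormedAddCommGroup L] [InnerProductSpace ℂ L]
    (κ : ℝ) (curl ι : V →L[ℂ] L) (eps : L →L[ℂ] L) (u v : V) : ℂ :=
  inner ℂ (curl v) (curl u) - (κ : ℂ) ^ 2 * inner ℂ (ι v) (eps (ι u))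

open Set Metric Module End
open scoped NNReal InnerProductSpace

theorem Metric.IsSeparated.finite_of_isCompact_closure {X : Type*} [PseudoEMetricSpace X]
    {ε : ℝ≥0} (hε : ε ≠ 0) {A C : Set X} (hA : IsCompact (closure A)) (hCA : C ⊆ A)
    (hC : IsSeparated ε C) : C.Finite := by
  obtain ⟨N, -, hN_fin, hN⟩ :=
    exists_finite_isCover_of_isCompact_closure (ε := ε / 2) (by simpa using hε) hA
  rw [← encard_lt_top_iff]
  calc C.encard ≤ packingNumber (2 * (ε / 2)) A := by
        rw [mul_div_cancel₀ _ two_ne_zero]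
        exact hC.encard_le_packingNumber hCA
    _ ≤ externalCoveringNumber (ε / 2) A := packingNumber_two_mul_le_externalCoveringNumber _ _
    _ ≤ N.encard := hN.externalCoveringNumber_le_encard
    _ < ⊤ := hN_fin.encard_lt_top

section LocallyFinite

variable {X : Type*} [MetricSpace X] {s : Set X} {c : X}

theorem Set.countable_of_forall_finite_inter_closedBall
    (hs : ∀ r > 0, (s ∩ closedBall c r).Finite) : s.Countable := by
  refine (countable_iUnion fun n : ℕ => (hs (n + 1) n.cast_add_one_pos).countable).mono ?_
  intro x hx
  obtain ⟨n, hn⟩ := exists_nat_gt (dist x c)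
  exact mem_iUnion.2 ⟨n, hx, by rw [mem_closedBall]; linarith⟩

theorem Set.exists_pos_le_dist_of_forall_finite_inter_closedBall
    (hs : ∀ r > 0, (s ∩ closedBall c r).Finite) (x : X) :
    ∃ ε : ℝ, 0 < ε ∧ ∀ y ∈ s, y ≠ x → ε ≤ dist x y := by
  set F := (s ∩ closedBall c (dist x c + 1)) \ {x}
  have hF : IsClosed F := (hs _ (by positivity)).sdiff.isClosed
  obtain ⟨δ, hδ, hball⟩ := isOpen_iff.1 hF.isOpen_compl x (fun h => h.2 rfl)
  refine ⟨min δ 1, lt_min hδ one_pos, fun y hy hyx => ?_⟩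
  by_contra! hxy
  have hyF : y ∈ F := by
    refine ⟨⟨hy, ?_⟩, hyx⟩
    have := dist_triangle y x c
    rw [mem_closedBall]
    rw [dist_comm y x] at this
    linarith [min_le_right δ 1]
  exact hball (mem_ball'.2 (hxy.trans_le (min_le_left δ 1))) hyF

end LocallyFinite

section CompactSymmetric

variable {𝕜 E : Type*} [RCLike 𝕜] [NormedAddCommGroup E] [InnerProductSpace 𝕜 E]

theorem LinearMap.IsSymmetric.norm_smul_sub_smul_sq {T : E →ₗ[𝕜] E}
    (hT : T.IsSymmetric) {μ ν : 𝕜} {u v : E} (hμν : μ ≠ ν)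
    (hu : u ∈ eigenspace T μ) (hv : v ∈ eigenspace T ν) (hu1 : ‖u‖ = 1) (hv1 : ‖v‖ = 1) :
    ‖μ • u - ν • v‖ ^ 2 = ‖μ‖ ^ 2 + ‖ν‖ ^ 2 := by
  have horth : ⟪u, v⟫_𝕜 = 0 := hT.orthogonalFamily_eigenspaces hμν ⟨u, hu⟩ ⟨v, hv⟩
  rw [@norm_sub_sq 𝕜, inner_smul_left, inner_smul_right, horth]
  simp [norm_smul, hu1, hv1]

theorem IsCompactOperator.finite_setOf_le_norm_hasEigenvalue {T : E →L[𝕜] E}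
    (hT : IsCompactOperator T) (hsym : (T : E →ₗ[𝕜] E).IsSymmetric) {ε : ℝ} (hε : 0 < ε) :
    {μ : 𝕜 | ε ≤ ‖μ‖ ∧ HasEigenvalue (T : End 𝕜 E) μ}.Finite := by
  set Λ := {μ : 𝕜 | ε ≤ ‖μ‖ ∧ HasEigenvalue (T : End 𝕜 E) μ}
  have hunit : ∀ μ ∈ Λ, ∃ u ∈ eigenspace (T : End 𝕜 E) μ, ‖u‖ = 1 := by
    rintro μ ⟨-, hμ⟩
    obtain ⟨v, hv, hv0⟩ := hμ.exists_hasEigenvector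
    exact ⟨(‖v‖⁻¹ : 𝕜) • v, Submodule.smul_mem _ _ hv, norm_smul_inv_norm hv0⟩
  choose! u hu_mem hu_norm using hunit
  have hTu : ∀ μ ∈ Λ, T (u μ) = μ • u μ := fun μ hμ => mem_eigenspace_iff.1 (hu_mem μ hμ)
  have hsep : ∀ μ ∈ Λ, ∀ ν ∈ Λ, μ ≠ ν → ε < dist (T (u μ)) (T (u ν)) := by
    intro μ hμ ν hν hμν
    have hsq := hsym.norm_smul_sub_smul_sq hμν (hu_mem μ hμ) (hu_mem ν hν)
      (hu_norm μ hμ) (hu_norm ν hν)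
    rw [dist_eq_norm, hTu μ hμ, hTu ν hν]
    nlinarith [hμ.1, hν.1, norm_nonneg (μ • u μ - ν • u ν)]
  have hinj : InjOn (fun μ => T (u μ)) Λ := fun μ hμ ν hν heq => by
    by_contra hμν
    simpa [heq] using (hε.trans (hsep μ hμ ν hν hμν))
  refine Finite.of_finite_image (IsSeparated.finite_of_isCompact_closure (ε := ε.toNNReal)
    (by simpa using hε) (hT.isCompact_closure_image_closedBall 1) ?_ ?_) hinj
  · rintro _ ⟨μ, hμ, rfl⟩
    exact ⟨u μ, by simp [hu_norm μ hμ], rfl⟩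
  · rintro _ ⟨μ, hμ, rfl⟩ _ ⟨ν, hν, rfl⟩ hne
    have hμν : μ ≠ ν := fun h => hne (h ▸ rfl)
    rw [edist_dist]
    exact (ENNReal.ofReal_lt_ofReal_iff (hε.trans (hsep μ hμ ν hν hμν))).2 (hsep μ hμ ν hν hμν)

end CompactSymmetric

section Stekloff

variable {V B : Type*} [Zero V] [NormedAddCommGroup B] [InnerProductSpace ℂ B]
  {a : V → V → ℂ} {tr : V → B} {S : B → B} {D : Submodule ℂ B} {T : D →L[ℂ] D}

def IsStekloffEigenpair (a : V → V → ℂ) (tr : V → B) (S : B → B) (lam : ℂ) (u : V) : Prop :=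
  u ≠ 0 ∧ ∀ v, a u v = -lam * ⟪tr v, S (tr u)⟫_ℂ

def stekloffSpectrum (a : V → V → ℂ) (tr : V → B) (S : B → B) : Set ℂ :=
  {lam | ∃ u, IsStekloffEigenpair a tr S lam u}

namespace IsStekloffEigenpair

variable {lam : ℂ} {u : V}

theorem smul_ne_zero (h : IsStekloffEigenpair a tr S lam u)
    (hN : ∀ u, (∀ v, a u v = 0) → u = 0) : lam • S (tr u) ≠ 0 := fun h0 =>
  h.1 <| hN u fun v => by rw [h.2 v, neg_mul, ← inner_smul_right, h0, inner_zero_right, neg_zero]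

theorem hasEigenvector (h : IsStekloffEigenpair a tr S lam u)
    (hN : ∀ u, (∀ v, a u v = 0) → u = 0)
    (hT : ∀ f : D, ∀ u, (∀ v, a u v = ⟪tr v, (f : B)⟫_ℂ) → (T f : B) = S (tr u))
    (su : D) (hsu : (su : B) = S (tr u)) :
    HasEigenvector (T : End ℂ D) (-1 / lam) su := by
  obtain ⟨hlam, hSu⟩ := smul_ne_zero_iff.1 (h.smul_ne_zero hN)
  have hsource : ∀ v, a u v = ⟪tr v, (((-lam) • su : D) : B)⟫_ℂ := fun v => by
    rw [Submodule.coe_smul, inner_smul_right, hsu, h.2 v]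
  have hTsu : (-lam) • T su = su := by
    rw [← map_smul]
    exact Subtype.ext ((hT _ u hsource).trans hsu.symm)
  refine ⟨mem_eigenspace_iff.2 ?_, fun h0 => hSu (by rw [← hsu, h0, Submodule.coe_zero])⟩
  rw [ContinuousLinearMap.coe_coe, neg_div, one_div, neg_inv,
    eq_inv_smul_iff₀ (neg_ne_zero.2 hlam)]
  exact hTsu

end IsStekloffEigenpair

theorem isStekloffEigenpair_of_apply_eq_smul (ha0 : ∀ v, a 0 v = 0)
    (hT : ∀ f : D, ∀ u, (∀ v, a u v = ⟪tr v, (f : B)⟫_ℂ) → (T f : B) = S (tr u))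
    {μ : ℂ} {g : D} (hμ : μ ≠ 0) (hg : g ≠ 0) (hTg : T g = μ • g) {w : V}
    (hw : ∀ v, a w v = ⟪tr v, (g : B)⟫_ℂ) :
    IsStekloffEigenpair a tr S (-1 / μ) w := by
  have hSw : S (tr w) = μ • (g : B) := by rw [← hT g w hw, hTg, Submodule.coe_smul]
  refine ⟨?_, fun v => ?_⟩
  · rintro rfl
    have hS0 : S (tr 0) = 0 := by simpa using (hT 0 0 (by simpa using ha0)).symm
    exact smul_ne_zero hμ (Subtype.coe_ne_coe.2 hg) (hSw.symm.trans hS0)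
  · rw [hSw, inner_smul_right, hw v]
    field_simp

theorem ne_zero_and_hasEigenvalue_of_mem_stekloffSpectrum (hSD : ∀ b, S b ∈ D)
    (hN : ∀ u, (∀ v, a u v = 0) → u = 0)
    (hT : ∀ f : D, ∀ u, (∀ v, a u v = ⟪tr v, (f : B)⟫_ℂ) → (T f : B) = S (tr u))
    {lam : ℂ} (hlam : lam ∈ stekloffSpectrum a tr S) :
    lam ≠ 0 ∧ HasEigenvalue (T : End ℂ D) (-1 / lam) := by
  obtain ⟨u, hu⟩ := hlam
  exact ⟨left_ne_zero_of_smul (hu.smul_ne_zero hN),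
    hasEigenvalue_of_hasEigenvector (hu.hasEigenvector hN hT ⟨S (tr u), hSD _⟩ rfl)⟩

theorem finite_stekloffSpectrum_inter_closedBall (hSD : ∀ b, S b ∈ D)
    (hN : ∀ u, (∀ v, a u v = 0) → u = 0)
    (hT : ∀ f : D, ∀ u, (∀ v, a u v = ⟪tr v, (f : B)⟫_ℂ) → (T f : B) = S (tr u))
    (hTc : IsCompactOperator T) (hTsym : (T : D →ₗ[ℂ] D).IsSymmetric) :
    ∀ r > 0, (stekloffSpectrum a tr S ∩ closedBall 0 r).Finite := by
  intro r hr
  refine ((hTc.finite_setOf_le_norm_hasEigenvalue hTsym (inv_pos.2 hr)).image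
    fun μ => -1 / μ).subset ?_
  rintro lam ⟨hlam, hlam_r⟩
  obtain ⟨hlam0, hμ⟩ := ne_zero_and_hasEigenvalue_of_mem_stekloffSpectrum hSD hN hT hlam
  refine ⟨-1 / lam, ⟨?_, hμ⟩, by field_simp⟩
  rw [norm_div, norm_neg, norm_one, one_div]
  exact inv_anti₀ (norm_pos_iff.2 hlam0) (mem_closedBall_zero_iff.1 hlam_r)

end Stekloff

theorem stekloff_T_eigenpair_correspondence_general
    {V L Bt : Type}
    [NormedAddCommGroup V] [InnerProductSpace ℂ V]
    [NormedAddCommGroup L] [InnerProductSpace ℂ L]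
    [NormedAddCommGroup Bt] [InnerProductSpace ℂ Bt]
    (κ : ℝ)
    (ι curl : V →L[ℂ] L) (eps : L →L[ℂ] L)
    (hNeumann : ∀ u : V, (∀ v : V, aForm κ curl ι eps u v = 0) → u = 0)
    (traceT : V → Bt) (D : Submodule ℂ Bt)
    (S : Bt →L[ℂ] Bt) (hSrange : ∀ μ : Bt, S μ ∈ D)
    -- `T f = S u_T`, compact and self-adjoint (Lemma 4.1):
    (T : D →L[ℂ] D)
    (hT : ∀ f : D, ∀ u : V,
      (∀ v : V, aForm κ curl ι eps u v = inner ℂ (traceT v) (f : Bt)) →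
      (T f : Bt) = S (traceT u))
    (hTcompact : IsCompactOperator (⇑T))
    (hTselfadj : ∀ f g : D, (inner ℂ ((T f : Bt)) ((g : Bt)) : ℂ)
      = inner ℂ ((f : Bt)) ((T g : Bt))) :
    -- (1) a Stekloff eigenpair `(λ,u)` yields the eigenpair `(−1/λ, S u_T)` of `T`:
    (∀ (lam : ℂ) (u : V), u ≠ 0 →
      (∀ v : V, aForm κ curl ι eps u v
        = -lam * (inner ℂ (traceT v) (S (traceT u)) : ℂ)) →
      ∀ su : D, (su : Bt) = S (traceT u) →
        su ≠ 0 ∧ T su = (-1 / lam) • su) ∧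
    -- (2) an eigenpair `(μ,g)` of `T` with `μ ≠ 0` yields the Stekloff
    --     eigenpair `(−1/μ, w)`, `w` the source solution with data `g`:
    (∀ (μ : ℂ) (g : D), μ ≠ 0 → g ≠ 0 → T g = μ • g →
      ∀ w : V,
        (∀ v : V, aForm κ curl ι eps w v = inner ℂ (traceT v) (g : Bt)) →
        w ≠ 0 ∧
        ∀ v : V, aForm κ curl ι eps w v
          = -(-1 / μ) * (inner ℂ (traceT v) (S (traceT w)) : ℂ)) ∧
    -- (3) consequently the Stekloff eigenvalues form a discrete set:
    (Set.Countable {lam : ℂ | ∃ u : V, u ≠ 0 ∧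
        ∀ v : V, aForm κ curl ι eps u v
          = -lam * (inner ℂ (traceT v) (S (traceT u)) : ℂ)} ∧
      ∀ lam ∈ {lam : ℂ | ∃ u : V, u ≠ 0 ∧
        ∀ v : V, aForm κ curl ι eps u v
          = -lam * (inner ℂ (traceT v) (S (traceT u)) : ℂ)},
        ∃ ε : ℝ, 0 < ε ∧
          ∀ lam' ∈ {lam : ℂ | ∃ u : V, u ≠ 0 ∧
            ∀ v : V, aForm κ curl ι eps u v
              = -lam * (inner ℂ (traceT v) (S (traceT u)) : ℂ)},
            lam' ≠ lam → ε ≤ dist lam lam') := by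
  have ha0 : ∀ v, aForm κ curl ι eps 0 v = 0 := fun v => by simp [aForm]
  have hfin := finite_stekloffSpectrum_inter_closedBall hSrange hNeumann hT hTcompact hTselfadj
  refine ⟨fun lam u hu heig su hsu => ?_,
    fun μ g hμ hg hTg w hw => isStekloffEigenpair_of_apply_eq_smul ha0 hT hμ hg hTg hw,
    countable_of_forall_finite_inter_closedBall hfin,
    fun lam _ => exists_pos_le_dist_of_forall_finite_inter_closedBall hfin lam⟩
  have hsu_eig := IsStekloffEigenpair.hasEigenvector ⟨hu, heig⟩ hNeumann hT su hsu
  exact ⟨hsu_eig.2, mem_eigenspace_iff.1 hsu_eig.1⟩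

/-- Stekloff eigenpairs correspond to eigenpairs of `T`
via `λ ↦ −1/λ`, and the Stekloff eigenvalues form a discrete set. -/
theorem stekloff_T_eigenpair_correspondence
    {V L G Bt : Type}
    [NormedAddCommGroup V] [InnerProductSpace ℂ V] [CompleteSpace V]
    [NormedAddCommGroup L] [InnerProductSpace ℂ L]
    [NormedAddCommGroup G] [NormedSpace ℂ G]
    [NormedAddCommGroup Bt] [InnerProductSpace ℂ Bt]
    (κ : ℝ) (hκ : 0 < κ)
    (ι curl : V →L[ℂ] L) (eps : L →L[ℂ] L)
    (α : ℝ) (hα : 0 < α)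
    (hcoer : ∀ w : L, α * ‖w‖ ^ 2 ≤ (inner ℂ w (eps w) : ℂ).re)
    (hNeumann : ∀ u : V, (∀ v : V, aForm κ curl ι eps u v = 0) → u = 0)
    (traceT : V → Bt) (D : Submodule ℂ Bt)
    (curlΓ : G →L[ℂ] Bt)
    (S : Bt →L[ℂ] Bt) (hSrange : ∀ μ : Bt, S μ ∈ D)
    (hS : ∀ μ : Bt, ∃ q : G, S μ = curlΓ q ∧
      ∀ ψ : G, (inner ℂ (curlΓ ψ) (curlΓ q) : ℂ) = inner ℂ (curlΓ ψ) μ)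
    -- unique solvability of the source problem:
    (hsource : ∀ f : D, ∃! u : V,
      ∀ v : V, aForm κ curl ι eps u v = inner ℂ (traceT v) (f : Bt))
    -- `T f = S u_T`, compact and self-adjoint (Lemma 4.1):
    (T : D →L[ℂ] D)
    (hT : ∀ f : D, ∀ u : V,
      (∀ v : V, aForm κ curl ι eps u v = inner ℂ (traceT v) (f : Bt)) →
      (T f : Bt) = S (traceT u))
    (hTcompact : IsCompactOperator (⇑T))
    (hTselfadj : ∀ f g : D, (inner ℂ ((T f : Bt)) ((g : Bt)) : ℂ)
      = inner ℂ ((f : Bt)) ((T g : Bt))) :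
    -- (1) a Stekloff eigenpair `(λ,u)` yields the eigenpair `(−1/λ, S u_T)` of `T`:
    (∀ (lam : ℂ) (u : V), u ≠ 0 →
      (∀ v : V, aForm κ curl ι eps u v
        = -lam * (inner ℂ (traceT v) (S (traceT u)) : ℂ)) →
      ∀ su : D, (su : Bt) = S (traceT u) →
        su ≠ 0 ∧ T su = (-1 / lam) • su) ∧
    -- (2) an eigenpair `(μ,g)` of `T` with `μ ≠ 0` yields the Stekloff
    --     eigenpair `(−1/μ, w)`, `w` the source solution with data `g`:
    (∀ (μ : ℂ) (g : D), μ ≠ 0 → g ≠ 0 → T g = μ • g →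
      ∀ w : V,
        (∀ v : V, aForm κ curl ι eps w v = inner ℂ (traceT v) (g : Bt)) →
        w ≠ 0 ∧
        ∀ v : V, aForm κ curl ι eps w v
          = -(-1 / μ) * (inner ℂ (traceT v) (S (traceT w)) : ℂ)) ∧
    -- (3) consequently the Stekloff eigenvalues form a discrete set:
    (Set.Countable {lam : ℂ | ∃ u : V, u ≠ 0 ∧
        ∀ v : V, aForm κ curl ι eps u v
          = -lam * (inner ℂ (traceT v) (S (traceT u)) : ℂ)} ∧
      ∀ lam ∈ {lam : ℂ | ∃ u : V, u ≠ 0 ∧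
        ∀ v : V, aForm κ curl ι eps u v
          = -lam * (inner ℂ (traceT v) (S (traceT u)) : ℂ)},
        ∃ ε : ℝ, 0 < ε ∧
          ∀ lam' ∈ {lam : ℂ | ∃ u : V, u ≠ 0 ∧
            ∀ v : V, aForm κ curl ι eps u v
              = -lam * (inner ℂ (traceT v) (S (traceT u)) : ℂ)},
            lam' ≠ lam → ε ≤ dist lam lam') :=
  stekloff_T_eigenpair_correspondence_general κ ι curl eps hNeumann traceT D S hSrange T hT
    hTcompact hTselfadj
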